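/- arXiv:0711.4940 — 2 statements merged into one kernel-verified Lean document; each statement's English description precedes it below -/
import Mathlib

section
/- For all nonnegative integers m₁ and m₂ and every real y > 0, ∑_{k=0}^{m₁} binom(m₂+m₁-k, m₂) * binom((m₂+m₁)/2, k) * (-1)^k * (1-y)^k = y^{m₁} * ∑_{k=0}^{m₁} binom(m₂+m₁-k, m₂) * binom((m₂+m₁)/2, k) * (1-y)^k * y^{-k}. -/
/-!
Put `s = (m₁ + m₂) / 2` and `a k = C(m₂ + m₁ - k, m₂) C(s, k)`. Both sides are values of
`P(x) = ∑ a k (x - 1) ^ k`: the left side is `P(y)` and the right side is `y ^ m₁ P(1/y)`.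
The coefficient of `x ^ i` in `P` is `C(s, i) C(s, m₁ - i)`: absorb `C(s, k) C(k, i)` into
`C(s, i) C(s - i, k - i)`, negate the upper index of `C(m₂ + m₁ - k, m₂)`, sum by Chu–Vandermonde,
and negate the upper index once more, which brings back `s` because `2 s = m₁ + m₂`.
So `P` is palindromic of degree `m₁`, which is the identity.
-/

/-- Generalized binomial coefficient `x(x-1)⋯(x-k+1)/k!` with real upper argument. -/
noncomputable def gchoose (x : ℝ) (k : ℕ) : ℝ :=
  (∏ i ∈ Finset.range k, (x - i)) / (Nat.factorial k)

open Finset Polynomial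

section CommRing

variable {R : Type*} [CommRing R]

theorem neg_one_pow_sub_mul_choose (k i : ℕ) :
    (-1 : R) ^ (k - i) * k.choose i = (-1) ^ i * (-1) ^ k * k.choose i := by
  rcases le_or_gt i k with hik | hki
  · obtain ⟨j, rfl⟩ := Nat.exists_eq_add_of_le hik
    rw [Nat.add_sub_cancel_left]
    ring_nf
    simp [pow_mul']
  · simp [Nat.choose_eq_zero_of_lt hki]

theorem sub_one_pow_eq_sum_range (x : R) {k N : ℕ} (hk : k ≤ N) :
    (x - 1) ^ k = ∑ i ∈ range (N + 1), (-1) ^ i * (-1) ^ k * k.choose i * x ^ i := by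
  rw [sub_eq_add_neg, add_pow]
  refine sum_subset (range_subset_range.mpr (by omega)) (fun i _ hi => ?_) |>.trans
    (sum_congr rfl fun i _ => ?_)
  · rw [Nat.choose_eq_zero_of_lt (by simpa using hi)]
    simp
  · rw [mul_assoc, mul_comm, ← neg_one_pow_sub_mul_choose]

theorem sum_mul_sub_one_pow (a : ℕ → R) (N : ℕ) (x : R) :
    ∑ k ∈ range (N + 1), a k * (x - 1) ^ k
      = ∑ i ∈ range (N + 1),
          ((-1) ^ i * ∑ k ∈ range (N + 1), (-1) ^ k * a k * k.choose i) * x ^ i := by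
  rw [sum_congr rfl fun k hk => by
    rw [sub_one_pow_eq_sum_range x (Nat.lt_succ_iff.mp (mem_range.mp hk)), mul_sum], sum_comm]
  refine sum_congr rfl fun i _ => ?_
  rw [mul_sum, sum_mul]
  exact sum_congr rfl fun k _ => by ring

variable [BinomialRing R]

namespace Ring

theorem choose_eq_neg_one_pow_mul_choose {r t : R} {n : ℕ} (h : r + t = n - 1) :
    choose r n = (-1) ^ n * choose t n := by
  have := choose_neg (-r) n
  rw [neg_neg, show -r + n - 1 = t by linear_combination -h] at this
  rw [this, Int.negOnePow_def, Units.smul_def]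
  simp

theorem natChoose_add_eq_neg_one_pow_mul_choose (m u : ℕ) :
    ((m + u).choose m : R) = (-1) ^ u * choose (-(m + 1 : R)) u := by
  rw [Nat.choose_symm_add, ← choose_natCast, choose_eq_neg_one_pow_mul_choose]
  push_cast
  ring

theorem choose_add_mul_natChoose (s : R) (i t : ℕ) :
    choose s (i + t) * ((i + t).choose i : R) = choose s i * choose (s - i) t := by
  rw [mul_comm, ← nsmul_eq_mul, choose_smul_choose s (Nat.le_add_right i t),
    Nat.add_sub_cancel_left]

theorem sum_range_choose_mul_choose_sub (r s : R) (n : ℕ) :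
    ∑ t ∈ range (n + 1), choose r t * choose s (n - t) = choose (r + s) n := by
  rw [add_choose_eq n (Commute.all r s),
    Nat.sum_antidiagonal_eq_sum_range_succ (fun a b => choose r a * choose s b)]

end Ring

theorem sum_neg_one_pow_mul_natChoose_mul_choose_mul_natChoose (s : R) (i n m : ℕ)
    (hs : s + s = i + n + m) :
    (-1) ^ i * ∑ k ∈ range (i + n + 1),
        (-1) ^ k * (((m + (i + n) - k).choose m : R) * Ring.choose s k) * k.choose i
      = Ring.choose s i * Ring.choose s n := by
  have hlow : ∑ k ∈ range i,
      (-1) ^ k * (((m + (i + n) - k).choose m : R) * Ring.choose s k) * k.choose i = 0 :=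
    sum_eq_zero fun k hk => by rw [Nat.choose_eq_zero_of_lt (mem_range.mp hk)]; simp
  have hterm : ∀ t ∈ range (n + 1),
      (-1) ^ (i + t) * (((m + (i + n) - (i + t)).choose m : R) * Ring.choose s (i + t))
          * (i + t).choose i
        = (-1) ^ (i + n) * Ring.choose s i
          * (Ring.choose (s - i) t * Ring.choose (-(m + 1 : R)) (n - t)) := by
    intro t ht
    obtain ⟨u, rfl⟩ := Nat.exists_eq_add_of_le (Nat.lt_succ_iff.mp (mem_range.mp ht))
    rw [show m + (i + (t + u)) - (i + t) = m + u by omega, Nat.add_sub_cancel_left,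
      Ring.natChoose_add_eq_neg_one_pow_mul_choose, mul_assoc _ _ ((i + t).choose i : R),
      mul_assoc, Ring.choose_add_mul_natChoose]
    ring
  have hupper : Ring.choose (s - i + -(m + 1 : R)) n = (-1) ^ n * Ring.choose s n :=
    Ring.choose_eq_neg_one_pow_mul_choose (by linear_combination hs)
  rw [add_assoc, sum_range_add, hlow, zero_add, sum_congr rfl hterm, ← mul_sum,
    Ring.sum_range_choose_mul_choose_sub, hupper]
  ring_nf
  simp [pow_mul']

theorem sum_natChoose_mul_choose_mul_sub_one_pow (s : R) (m₁ m₂ : ℕ) (hs : s + s = m₁ + m₂)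
    (x : R) :
    ∑ k ∈ range (m₁ + 1), ((m₂ + m₁ - k).choose m₂ : R) * Ring.choose s k * (x - 1) ^ k
      = ∑ i ∈ range (m₁ + 1), Ring.choose s i * Ring.choose s (m₁ - i) * x ^ i := by
  rw [sum_mul_sub_one_pow]
  refine sum_congr rfl fun i hi => ?_
  obtain ⟨n, rfl⟩ := Nat.exists_eq_add_of_le (Nat.lt_succ_iff.mp (mem_range.mp hi))
  rw [sum_neg_one_pow_mul_natChoose_mul_choose_mul_natChoose s i n m₂
      (by push_cast at hs; linear_combination hs),
    Nat.add_sub_cancel_left]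

end CommRing

theorem pow_mul_sum_inv_pow_of_symm {K : Type*} [Field K] {y : K} (hy : y ≠ 0) (c : ℕ → K)
    (n : ℕ) (hc : ∀ i ≤ n, c (n - i) = c i) :
    y ^ n * ∑ i ∈ range (n + 1), c i * y⁻¹ ^ i = ∑ i ∈ range (n + 1), c i * y ^ i := by
  rw [mul_sum, ← sum_range_reflect]
  refine sum_congr rfl fun i hi => ?_
  have hi : i ≤ n := Nat.lt_succ_iff.mp (mem_range.mp hi)
  rw [Nat.add_sub_cancel, hc i hi, inv_pow, mul_left_comm, ← pow_sub₀ y hy (Nat.sub_le n i),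
    Nat.sub_sub_self hi]

theorem gchoose_eq_ringChoose (x : ℝ) (k : ℕ) : gchoose x k = Ring.choose x k := by
  rw [Ring.choose_eq_smul, ← aeval_eq_smeval, aeval_def, eval₂_eq_eval_map, descPochhammer_map,
    descPochhammer_eval_eq_prod_range, gchoose, smul_eq_mul, div_eq_inv_mul]

theorem stmt1 (m₁ m₂ : ℕ) (y : ℝ) (hy : 0 < y) :
    ∑ k ∈ Finset.range (m₁ + 1),
        ((m₂ + m₁ - k).choose m₂ : ℝ) * gchoose ((m₂ + m₁ : ℝ) / 2) k * (-1) ^ k * (1 - y) ^ k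
      = y ^ m₁ * ∑ k ∈ Finset.range (m₁ + 1),
          ((m₂ + m₁ - k).choose m₂ : ℝ) * gchoose ((m₂ + m₁ : ℝ) / 2) k * (1 - y) ^ k
            * y ^ (-(k : ℤ)) := by
  set s : ℝ := (m₂ + m₁ : ℝ) / 2
  have hs : s + s = m₁ + m₂ := by ring
  have hy₀ : y ≠ 0 := hy.ne'
  have hsymm : ∀ i ≤ m₁, Ring.choose s (m₁ - i) * Ring.choose s (m₁ - (m₁ - i))
      = Ring.choose s i * Ring.choose s (m₁ - i) := fun i hi => by
    rw [Nat.sub_sub_self hi, mul_comm]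
  simp_rw [gchoose_eq_ringChoose]
  calc _ = ∑ k ∈ range (m₁ + 1), ((m₂ + m₁ - k).choose m₂ : ℝ) * Ring.choose s k * (y - 1) ^ k :=
        sum_congr rfl fun k _ => by rw [mul_assoc, ← mul_pow, neg_one_mul, neg_sub]
    _ = y ^ m₁ * ∑ k ∈ range (m₁ + 1),
          ((m₂ + m₁ - k).choose m₂ : ℝ) * Ring.choose s k * (y⁻¹ - 1) ^ k := by
        rw [sum_natChoose_mul_choose_mul_sub_one_pow s m₁ m₂ hs,
          sum_natChoose_mul_choose_mul_sub_one_pow s m₁ m₂ hs,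
          pow_mul_sum_inv_pow_of_symm hy₀ _ m₁ hsymm]
    _ = _ := by
        congr 1
        refine sum_congr rfl fun k _ => ?_
        rw [zpow_neg, zpow_natCast, ← inv_pow, mul_assoc _ ((1 - y) ^ k), ← mul_pow, sub_mul,
          one_mul, mul_inv_cancel₀ hy₀]
end

section
/- Let 0 < a < b and f(x) = log x. Let P, Q be the Hermite interpolants of degree ≤ 3 with P matching f, f', f'' at a and f at b, and Q matching f at a and f, f', f'' at b (i.e., m₁ = 2, m₂ = 0). Then the unique x₀ ∈ (a,b) with P(x₀) = Q(x₀) is x₀ = 3ab·(b² - a² - 2ab·log(b/a))/(b-a)³. -/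
/-!
Both interpolants are second-order Taylor polynomials of `log` plus a cubic correction:
`P(x) = log a + (x - a)/a - (x - a)²/(2a²) + κ (x - a)³`, with `κ` fixed by `P(b) = log b`, and
symmetrically for `Q` at `b`. The difference `P - Q` vanishes at `a` and at `b`, so it is
`(x - a)(x - b)` times a linear factor; explicitly
`P - Q = (x - a)(x - b) ((b - a)³ x - 3ab(b² - a² - 2ab log(b/a))) / (2a²b²(b - a)²)`,
and the root of the linear factor is the claimed `x₀`.
-/

open Polynomial Real

namespace Polynomial

section CommRing

variable {R : Type*} [CommRing R] {p : R[X]}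

theorem eval_eq_of_natDegree_le_three (hp : p.natDegree ≤ 3) (x : R) :
    p.eval x = p.coeff 0 + p.coeff 1 * x + p.coeff 2 * x ^ 2 + p.coeff 3 * x ^ 3 := by
  rw [eval_eq_sum_range' (by omega : p.natDegree < 4)]
  simp [Finset.sum_range_succ]

theorem two_mul_eval_eq_taylor_of_natDegree_le_three (hp : p.natDegree ≤ 3) (c x : R) :
    2 * p.eval x = 2 * p.eval c + 2 * p.derivative.eval c * (x - c) +
      p.derivative.derivative.eval c * (x - c) ^ 2 + 2 * p.coeff 3 * (x - c) ^ 3 := by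
  have hp' : p.derivative.natDegree ≤ 3 := (natDegree_derivative_le p).trans (by omega)
  have hp'' : p.derivative.derivative.natDegree ≤ 3 :=
    (natDegree_derivative_le _).trans (by omega)
  have h4 : p.coeff 4 = 0 := coeff_eq_zero_of_natDegree_lt (by omega)
  have h5 : p.coeff 5 = 0 := coeff_eq_zero_of_natDegree_lt (by omega)
  rw [eval_eq_of_natDegree_le_three hp, eval_eq_of_natDegree_le_three hp,
    eval_eq_of_natDegree_le_three hp', eval_eq_of_natDegree_le_three hp'']
  simp only [coeff_derivative, h4, h5]
  push_cast
  ring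

end CommRing

theorem iteratedDeriv_eval {𝕜 : Type*} [NontriviallyNormedField 𝕜] (n : ℕ) (p : 𝕜[X]) :
    iteratedDeriv n (fun x => p.eval x) = fun x => (derivative^[n] p).eval x := by
  induction n generalizing p with
  | zero => simp
  | succ n ih =>
    have : deriv (fun x => p.eval x) = fun x => p.derivative.eval x := by
      funext x
      exact p.deriv
    rw [iteratedDeriv_succ', this, ih, Function.iterate_succ_apply]

end Polynomial

theorem Real.iteratedDeriv_two_log : iteratedDeriv 2 log = fun x => -(x ^ 2)⁻¹ := by
  rw [iteratedDeriv_succ, iteratedDeriv_one, deriv_log']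
  funext x
  exact deriv_inv

/-- The cubic agreeing with `log` to second order at `c` and with `log d` at `d`. -/
noncomputable def logHermite (c d x : ℝ) : ℝ :=
  log c + (x - c) / c - (x - c) ^ 2 / (2 * c ^ 2) +
    (log d - log c - (d - c) / c + (d - c) ^ 2 / (2 * c ^ 2)) * ((x - c) / (d - c)) ^ 3

theorem eval_eq_logHermite {c d : ℝ} (hc : c ≠ 0) (hcd : c ≠ d) {p : ℝ[X]}
    (hp : p.natDegree ≤ 3)
    (hpc : ∀ j ≤ 2, iteratedDeriv j (fun t => p.eval t) c = iteratedDeriv j log c)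
    (hpd : p.eval d = log d) (x : ℝ) :
    p.eval x = logHermite c d x := by
  have h0 := hpc 0 (by norm_num)
  have h1 := hpc 1 (by norm_num)
  have h2 := hpc 2 (by norm_num)
  simp only [iteratedDeriv_eval, Function.iterate_succ_apply, Function.iterate_zero_apply,
    iteratedDeriv_zero, iteratedDeriv_one, deriv_log, iteratedDeriv_two_log] at h0 h1 h2
  have hx := two_mul_eval_eq_taylor_of_natDegree_le_three hp c x
  have hd := two_mul_eval_eq_taylor_of_natDegree_le_three hp c d
  rw [h0, h1, h2] at hx hd
  rw [hpd] at hd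
  field_simp at hx hd
  have hdc : d - c ≠ 0 := sub_ne_zero.mpr hcd.symm
  unfold logHermite
  field_simp
  linear_combination (d - c) ^ 3 * hx - (x - c) ^ 3 * hd

theorem logHermite_sub_logHermite {a b : ℝ} (ha : a ≠ 0) (hb : b ≠ 0) (hab : a ≠ b) (x : ℝ) :
    logHermite a b x - logHermite b a x =
      (x - a) * (x - b) / (2 * a ^ 2 * b ^ 2 * (b - a) ^ 2) *
        ((b - a) ^ 3 * x - 3 * a * b * (b ^ 2 - a ^ 2 - 2 * a * b * (log b - log a))) := by
  have hba : b - a ≠ 0 := sub_ne_zero.mpr hab.symm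
  have hab' : a - b ≠ 0 := sub_ne_zero.mpr hab
  unfold logHermite
  field_simp
  ring

theorem stmt16 (a b : ℝ) (ha : 0 < a) (hab : a < b)
    (P Q : Polynomial ℝ) (hPdeg : P.natDegree ≤ 3) (hQdeg : Q.natDegree ≤ 3)
    (hPa : ∀ j ≤ 2, iteratedDeriv j (fun t => P.eval t) a = iteratedDeriv j Real.log a)
    (hPb : P.eval b = Real.log b)
    (hQa : Q.eval a = Real.log a)
    (hQb : ∀ j ≤ 2, iteratedDeriv j (fun t => Q.eval t) b = iteratedDeriv j Real.log b) :
    ∀ x ∈ Set.Ioo a b,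
      (P.eval x = Q.eval x ↔
        x = 3 * a * b * (b ^ 2 - a ^ 2 - 2 * a * b * Real.log (b / a)) / (b - a) ^ 3) := by
  rintro x ⟨hax, hxb⟩
  have hb : 0 < b := ha.trans hab
  have hfactor : (x - a) * (x - b) / (2 * a ^ 2 * b ^ 2 * (b - a) ^ 2) ≠ 0 := by
    have : b - a ≠ 0 := sub_ne_zero.mpr hab.ne'
    have : x - a ≠ 0 := sub_ne_zero.mpr hax.ne'
    have : x - b ≠ 0 := sub_ne_zero.mpr hxb.ne
    positivity
  rw [eval_eq_logHermite ha.ne' hab.ne hPdeg hPa hPb,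
    eval_eq_logHermite hb.ne' hab.ne' hQdeg hQb hQa, ← sub_eq_zero,
    logHermite_sub_logHermite ha.ne' hb.ne' hab.ne, mul_eq_zero, or_iff_right hfactor,
    sub_eq_zero, log_div hb.ne' ha.ne', eq_div_iff (pow_pos (sub_pos.mpr hab) 3).ne', mul_comm]
end
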